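/- arXiv:math/0606529 — 2 statements merged into one kernel-verified Lean document; each statement's English description precedes it below -/
import Mathlib

section
/- Assume the continuum hypothesis 2^{ℵ₀} = ℵ₁. Then the Muchnik lattice has a chain of cardinality 2^{2^{ℵ₀}}: there exists a family ℱ of mass problems of cardinality 2^{2^{ℵ₀}} that is linearly ordered by ≤_w and such that any two distinct members of ℱ are not Muchnik equivalent. -/
open Cardinal

namespace Muchnik

/-- Oracle partial recursiveness: `f` is partial recursive relative to the oracle `g`. -/
inductive RecursiveIn (g : ℕ → ℕ) : (ℕ →. ℕ) → Prop
  | oracle : RecursiveIn g ↑g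
  | zero : RecursiveIn g (pure 0)
  | succ : RecursiveIn g ↑Nat.succ
  | left : RecursiveIn g ↑fun n : ℕ => n.unpair.1
  | right : RecursiveIn g ↑fun n : ℕ => n.unpair.2
  | pair {f h} : RecursiveIn g f → RecursiveIn g h →
      RecursiveIn g fun n => Nat.pair <$> f n <*> h n
  | comp {f h} : RecursiveIn g f → RecursiveIn g h →
      RecursiveIn g fun n => h n >>= f
  | prec {f h} : RecursiveIn g f → RecursiveIn g h →
      RecursiveIn g (Nat.unpaired fun a n =>
        n.rec (f a) fun y IH => do let i ← IH; h (Nat.pair a (Nat.pair y i)))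
  | rfind {f} : RecursiveIn g f →
      RecursiveIn g fun a => Nat.rfind fun n => (fun m => m = 0) <$> f (Nat.pair a n)

/-- Turing reducibility `f ≤_T g` for elements of Baire space. -/
def TuringLe (f g : ℕ → ℕ) : Prop := RecursiveIn g ↑f

/-- Strict Turing reducibility `f <_T g`. -/
def TuringLt (f g : ℕ → ℕ) : Prop := TuringLe f g ∧ ¬ TuringLe g f

/-- Turing equivalence `f ≡_T g`. -/
def TuringEquiv (f g : ℕ → ℕ) : Prop := TuringLe f g ∧ TuringLe g f

/-- Turing incomparability `f |_T g`. -/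
def TuringIncomp (f g : ℕ → ℕ) : Prop := ¬ TuringLe f g ∧ ¬ TuringLe g f

/-- Muchnik reducibility `A ≤_w B` between mass problems. -/
def MuchnikLe (A B : Set (ℕ → ℕ)) : Prop := ∀ f ∈ B, ∃ g ∈ A, TuringLe g f

/-- Strict Muchnik reducibility `A <_w B`. -/
def MuchnikLt (A B : Set (ℕ → ℕ)) : Prop := MuchnikLe A B ∧ ¬ MuchnikLe B A

/-- Muchnik equivalence `A ≡_w B`. -/
def MuchnikEquiv (A B : Set (ℕ → ℕ)) : Prop := MuchnikLe A B ∧ MuchnikLe B A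

/-- The strict Turing upper cone `C'(f) = {g : f <_T g}`. -/
def cone (f : ℕ → ℕ) : Set (ℕ → ℕ) := {g | TuringLt f g}

/-- The recursive join `f ⊕ g`: `(f ⊕ g)(2x) = f(x)` and `(f ⊕ g)(2x+1) = g(x)`. -/
def join (f g : ℕ → ℕ) : ℕ → ℕ := fun n => if n % 2 = 0 then f (n / 2) else g (n / 2)

/-- The join `A + B` of mass problems. -/
def joinSet (A B : Set (ℕ → ℕ)) : Set (ℕ → ℕ) := {h | ∃ f ∈ A, ∃ g ∈ B, h = join f g}

/-- Identification of `2^ω` with a subset of Baire space. -/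
def ofBool (X : ℕ → Bool) : ℕ → ℕ := fun n => if X n then 1 else 0


/-! Order `ω₁ → Bool` lexicographically. Under CH this chain has `2 ^ ℵ₁ = 2 ^ 2 ^ ℵ₀` elements,
while the countably supported functions, of which there are only `ℵ₁ ^ ℵ₀ = 2 ^ ℵ₀`, are dense
in it: if `x < y`, cut `y` off just after the first place where `x` and `y` differ. A Kleene–Post
finite-extension construction along a perfect tree yields `2 ^ ℵ₀` pairwise Turing incomparable
reals, so the countably supported `d` can be labelled by pairwise incomparable reals `g d`. Then
`x ↦ {f | ∃ d ≤ x, g d ≤_T f}` reverses the order into the Muchnik lattice, and strictly so: if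
`x < d ≤ y`, then `g d` solves the problem of `y` but computes no solution of the problem of `x`. -/

open PiNat Set Function Filter

theorem RecursiveIn.of_turingLe {g h : ℕ → ℕ} {p : ℕ →. ℕ} (hp : RecursiveIn g p)
    (hg : TuringLe g h) : RecursiveIn h p := by
  induction hp with
  | oracle => exact hg
  | zero => exact .zero
  | succ => exact .succ
  | left => exact .left
  | right => exact .right
  | pair _ _ ih₁ ih₂ => exact .pair ih₁ ih₂
  | comp _ _ ih₁ ih₂ => exact .comp ih₁ ih₂
  | prec _ _ ih₁ ih₂ => exact .prec ih₁ ih₂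
  | rfind _ ih => exact .rfind ih

theorem TuringLe.refl (f : ℕ → ℕ) : TuringLe f f := RecursiveIn.oracle

theorem TuringLe.trans {f g h : ℕ → ℕ} (hfg : TuringLe f g) (hgh : TuringLe g h) :
    TuringLe f h :=
  hfg.of_turingLe hgh

theorem muchnikLe_of_subset {A B : Set (ℕ → ℕ)} (h : B ⊆ A) : MuchnikLe A B :=
  fun f hf => ⟨f, h hf, TuringLe.refl f⟩

theorem muchnikLe_refl (A : Set (ℕ → ℕ)) : MuchnikLe A A := muchnikLe_of_subset subset_rfl

section UsePrinciple

variable {X α β : Type*} [TopologicalSpace X]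

theorem isOpen_setOf_mem_bind {P : X → Part α} {Q : X → α → Part β}
    (hP : ∀ a, IsOpen {x | a ∈ P x}) (hQ : ∀ a b, IsOpen {x | b ∈ Q x a}) (b : β) :
    IsOpen {x | b ∈ (P x).bind (Q x)} := by
  simp only [Part.mem_bind_iff, ofPred_exists, ofPred_and]
  exact isOpen_iUnion fun a => (hP a).inter (hQ a b)

theorem isOpen_setOf_mem_map {P : X → Part α} (hP : ∀ a, IsOpen {x | a ∈ P x}) (f : α → β)
    (b : β) : IsOpen {x | b ∈ (P x).map f} := by
  simp only [Part.mem_map_iff, ofPred_exists, ofPred_and]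
  exact isOpen_iUnion fun a => (hP a).inter isOpen_const

theorem isOpen_setOf_mem_rfind {P : X → ℕ →. Bool} (hP : ∀ k b, IsOpen {x | b ∈ P x k})
    (m : ℕ) : IsOpen {x | m ∈ Nat.rfind (P x)} := by
  simp only [Nat.mem_rfind, ofPred_and, ofPred_forall]
  exact (hP m true).inter ((finite_lt_nat m).isOpen_biInter fun k _ => hP k false)

end UsePrinciple

inductive Code : Type
  | oracle | zero | succ | left | right
  | pair (c d : Code)
  | comp (c d : Code)
  | prec (c d : Code)
  | rfind (c : Code)

namespace Code

def eval (g : ℕ → ℕ) : Code → ℕ →. ℕ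
  | oracle => ↑g
  | zero => pure 0
  | succ => ↑Nat.succ
  | left => ↑fun n : ℕ => n.unpair.1
  | right => ↑fun n : ℕ => n.unpair.2
  | pair c d => fun n => Nat.pair <$> eval g c n <*> eval g d n
  | comp c d => fun n => eval g d n >>= eval g c
  | prec c d => Nat.unpaired fun a n =>
      n.rec (eval g c a) fun y IH => do let i ← IH; eval g d (Nat.pair a (Nat.pair y i))
  | rfind c => fun a => Nat.rfind fun n => (fun m => m = 0) <$> eval g c (Nat.pair a n)

def encode : Code → ℕ
  | oracle => 0
  | zero => 1
  | succ => 2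
  | left => 3
  | right => 4
  | pair c d => 4 * Nat.pair c.encode d.encode + 5
  | comp c d => 4 * Nat.pair c.encode d.encode + 6
  | prec c d => 4 * Nat.pair c.encode d.encode + 7
  | rfind c => 4 * c.encode + 8

theorem encode_injective : Injective encode := by
  intro c d h
  induction c generalizing d <;> cases d <;>
    simp only [encode, Nat.add_right_cancel_iff, Nat.mul_left_cancel_iff four_pos,
      Nat.pair_eq_pair] at h ⊢ <;>
    first | omega | grind

instance : Countable Code := encode_injective.countable

instance : Inhabited Code := ⟨oracle⟩

/-- The use principle: a halting oracle computation reads only finitely many values of its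
oracle. -/
theorem isOpen_setOf_mem_eval (c : Code) (n m : ℕ) : IsOpen {g : ℕ → ℕ | m ∈ c.eval g n} := by
  induction c generalizing n m with
  | oracle =>
    simp only [eval, PFun.coe_val, Part.mem_some_iff, eq_comm (a := m)]
    exact (isOpen_discrete {m}).preimage (continuous_apply (A := fun _ => ℕ) n)
  | zero | succ | left | right => simp only [eval]; exact isOpen_const
  | pair c d ihc ihd =>
    simp only [eval, Seq.seq, Part.map_eq_map]
    exact isOpen_setOf_mem_bind (fun _ => isOpen_setOf_mem_map (ihc n) _ _)
      (fun _ _ => isOpen_setOf_mem_map (ihd n) _ _) m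
  | comp c d ihc ihd =>
    simp only [eval]
    exact isOpen_setOf_mem_bind (ihd n) ihc m
  | prec c d ihc ihd =>
    simp only [eval, Nat.unpaired, Part.bind_eq_bind]
    induction n.unpair.2 generalizing m with
    | zero => exact ihc _ m
    | succ k ih => exact isOpen_setOf_mem_bind ih (fun _ _ => ihd _ _) m
  | rfind c ih => exact isOpen_setOf_mem_rfind (fun _ _ => isOpen_setOf_mem_map (ih _) _ _) m

def FailsOn (c : Code) (U V : Set (ℕ → ℕ)) : Prop :=
  ∀ x ∈ U, ∀ y ∈ V, c.eval x ≠ ↑y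

theorem FailsOn.mono {c : Code} {U V U' V' : Set (ℕ → ℕ)} (h : c.FailsOn U V)
    (hU : U' ⊆ U) (hV : V' ⊆ V) : c.FailsOn U' V' :=
  fun x hx y hy => h x (hU hx) y (hV hy)

end Code

theorem RecursiveIn.exists_code_eval_eq {g : ℕ → ℕ} {p : ℕ →. ℕ} (h : RecursiveIn g p) :
    ∃ c : Code, c.eval g = p := by
  induction h with
  | oracle => exact ⟨.oracle, rfl⟩
  | zero => exact ⟨.zero, rfl⟩
  | succ => exact ⟨.succ, rfl⟩
  | left => exact ⟨.left, rfl⟩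
  | right => exact ⟨.right, rfl⟩
  | pair _ _ ih₁ ih₂ =>
    obtain ⟨c, rfl⟩ := ih₁; obtain ⟨d, rfl⟩ := ih₂; exact ⟨.pair c d, rfl⟩
  | comp _ _ ih₁ ih₂ =>
    obtain ⟨c, rfl⟩ := ih₁; obtain ⟨d, rfl⟩ := ih₂; exact ⟨.comp c d, rfl⟩
  | prec _ _ ih₁ ih₂ =>
    obtain ⟨c, rfl⟩ := ih₁; obtain ⟨d, rfl⟩ := ih₂; exact ⟨.prec c d, rfl⟩
  | rfind _ ih => obtain ⟨c, rfl⟩ := ih; exact ⟨.rfind c, rfl⟩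

theorem exists_cylinder_subset_of_isOpen {s : Set (ℕ → ℕ)} (hs : IsOpen s) {x : ℕ → ℕ}
    (hx : x ∈ s) : ∃ n, cylinder x n ⊆ s := by
  obtain ⟨_, ⟨y, n, rfl⟩, hxy, hys⟩ :=
    (isTopologicalBasis_cylinders fun _ => ℕ).exists_subset_of_mem_open hx hs
  exact ⟨n, mem_cylinder_iff_eq.1 hxy ▸ hys⟩

/-- A forcing condition: `⟨σ, n⟩` stands for the finite string `σ 0, …, σ (n - 1)`, and `p ≤ q`
means that `p` extends `q`. -/
structure Condition where
  center : ℕ → ℕ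
  len : ℕ

namespace Condition

def cyl (p : Condition) : Set (ℕ → ℕ) := cylinder p.center p.len

instance : Preorder Condition where
  le p q := q.len ≤ p.len ∧ p.cyl ⊆ q.cyl
  le_refl _ := ⟨le_rfl, subset_rfl⟩
  le_trans _ _ _ h h' := ⟨h'.1.trans h.1, h.2.trans h'.2⟩

theorem len_le_len {p q : Condition} (h : p ≤ q) : q.len ≤ p.len := h.1

theorem cyl_subset_cyl {p q : Condition} (h : p ≤ q) : p.cyl ⊆ q.cyl := h.2

theorem center_mem_cyl (p : Condition) : p.center ∈ p.cyl := self_mem_cylinder _ _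

theorem mk_le {p : Condition} {x : ℕ → ℕ} (hx : x ∈ p.cyl) {n : ℕ} (hn : p.len ≤ n) :
    (⟨x, n⟩ : Condition) ≤ p :=
  ⟨hn, (cylinder_anti x hn).trans (mem_cylinder_iff_eq.1 hx).le⟩

def lengthen (p : Condition) : Condition := ⟨p.center, p.len + 1⟩

theorem lengthen_le (p : Condition) : p.lengthen ≤ p := mk_le p.center_mem_cyl (Nat.le_succ _)

theorem exists_mem_cyl_of_antitone {p : ℕ → Condition} (hp : Antitone p)
    (hlen : ∀ n, n ≤ (p n).len) : ∃ x, ∀ n, x ∈ (p n).cyl := by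
  refine ⟨fun i => (p (i + 1)).center i, fun n i hi => ?_⟩
  rcases le_total (i + 1) n with h | h
  · exact (cyl_subset_cyl (hp h) (p n).center_mem_cyl i
      ((Nat.lt_succ_self i).trans_le (hlen _))).symm
  · exact cyl_subset_cyl (hp h) (p (i + 1)).center_mem_cyl i hi

end Condition

namespace Code

/-- Kleene–Post: if `c` halts at `q.len` on some oracle extending `p`, freeze enough of that oracle
and give `q` a different value at `q.len`; otherwise `c` already diverges there. -/
theorem exists_le_failsOn (c : Code) (p q : Condition) :
    ∃ p' ≤ p, ∃ q' ≤ q, c.FailsOn p'.cyl q'.cyl := by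
  by_cases h : ∃ x ∈ p.cyl, ∃ m, m ∈ c.eval x q.len
  · obtain ⟨x, hx, m, hm⟩ := h
    obtain ⟨k, hk⟩ := exists_cylinder_subset_of_isOpen (c.isOpen_setOf_mem_eval q.len m) hm
    refine ⟨⟨x, max k p.len⟩, Condition.mk_le hx (le_max_right _ _),
      ⟨update q.center q.len (m + 1), q.len + 1⟩,
      Condition.mk_le (update_mem_cylinder _ _ _) (Nat.le_succ _), ?_⟩
    intro x' hx' y hy hxy
    have hmx' : m ∈ c.eval x' q.len := hk (cylinder_anti x (le_max_left _ _) hx')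
    have hmy : y q.len = m + 1 := by simpa using hy q.len q.len.lt_succ_self
    rw [hxy, PFun.coe_val, Part.mem_some_iff] at hmx'
    omega
  · refine ⟨p, le_rfl, q, le_rfl, fun x hx y _ hxy => h ⟨x, hx, y q.len, ?_⟩⟩
    simp [hxy]

theorem exists_le_forall_mem_failsOn {ι : Type*} (c : Code) (f : ι → Condition)
    (l : List (ι × ι)) :
    ∃ f' ≤ f, ∀ ij ∈ l, ij.1 ≠ ij.2 → c.FailsOn (f' ij.1).cyl (f' ij.2).cyl := by
  classical
  induction l with
  | nil => exact ⟨f, le_rfl, by simp⟩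
  | cons ij l ih =>
    obtain ⟨f', hf', hl⟩ := ih
    obtain ⟨i, j⟩ := ij
    by_cases hij : i = j
    · exact ⟨f', hf', by simpa [hij] using hl⟩
    obtain ⟨p, hp, q, hq, hpq⟩ := c.exists_le_failsOn (f' i) (f' j)
    set f'' := update (update f' i p) j q
    have hf'' : f'' ≤ f' := by
      intro k
      by_cases hkj : k = j
      · subst hkj; simpa [f''] using hq
      by_cases hki : k = i
      · subst hki; simpa [f'', hkj] using hp
      · simp [f'', hkj, hki]
    refine ⟨f'', hf''.trans hf', ?_⟩
    rintro ⟨i', j'⟩ hmem hne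
    rcases List.mem_cons.1 hmem with h | h
    · obtain ⟨rfl, rfl⟩ := Prod.mk.inj h
      simpa [f'', hij] using hpq
    · exact (hl _ h hne).mono (Condition.cyl_subset_cyl (hf'' _))
        (Condition.cyl_subset_cyl (hf'' _))

theorem exists_le_pairwise_failsOn {ι : Type*} [Finite ι] (c : Code) (f : ι → Condition) :
    ∃ f' ≤ f, Pairwise fun i j => c.FailsOn (f' i).cyl (f' j).cyl := by
  obtain ⟨l, -, hl⟩ := Finite.exists_univ_list (ι × ι)
  obtain ⟨f', hf', h⟩ := c.exists_le_forall_mem_failsOn f l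
  exact ⟨f', hf', fun i j hij => h (i, j) (hl _) hij⟩

end Code

theorem exists_seq_frequently_eq (α : Type*) [Countable α] [Nonempty α] :
    ∃ s : ℕ → α, ∀ a, ∃ᶠ k in atTop, s k = a := by
  obtain ⟨e, he⟩ := exists_surjective_nat α
  refine ⟨fun k => e k.unpair.1, fun a => frequently_atTop.2 fun N => ?_⟩
  obtain ⟨i, rfl⟩ := he a
  exact ⟨Nat.pair i N, Nat.right_le_pair i N, by simp⟩

section PerfectTree

variable (s : ℕ → Code)

noncomputable def node : (n : ℕ) → (Fin n → Bool) → Condition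
  | 0 => fun _ => ⟨0, 0⟩
  | n + 1 => ((s n).exists_le_pairwise_failsOn fun t => (node n (Fin.init t)).lengthen).choose

theorem node_succ_spec (n : ℕ) :
    (node s (n + 1) ≤ fun t => (node s n (Fin.init t)).lengthen) ∧
      Pairwise fun t t' => (s n).FailsOn (node s (n + 1) t).cyl (node s (n + 1) t').cyl :=
  ((s n).exists_le_pairwise_failsOn _).choose_spec

theorem node_succ_le {n : ℕ} (t : Fin (n + 1) → Bool) :
    node s (n + 1) t ≤ node s n (Fin.init t) :=
  ((node_succ_spec s n).1 t).trans (Condition.lengthen_le _)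

theorem le_len_node : ∀ (n : ℕ) (t : Fin n → Bool), n ≤ (node s n t).len
  | 0, _ => le_rfl
  | n + 1, t => (Nat.succ_le_succ (le_len_node n _)).trans
      (Condition.len_le_len ((node_succ_spec s n).1 t))

theorem exists_mem_cyl_node (X : ℕ → Bool) : ∃ x, ∀ n, x ∈ (node s n fun i => X i).cyl :=
  Condition.exists_mem_cyl_of_antitone (antitone_nat_of_succ_le fun _ => node_succ_le s _)
    fun n => le_len_node s n _

end PerfectTree

theorem exists_pairwise_not_turingLe :
    ∃ θ : (ℕ → Bool) → ℕ → ℕ, Pairwise fun X Y => ¬ TuringLe (θ X) (θ Y) := by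
  obtain ⟨s, hs⟩ := exists_seq_frequently_eq Code
  choose θ hθ using exists_mem_cyl_node s
  refine ⟨θ, fun X Y hXY hle => ?_⟩
  obtain ⟨c, hc⟩ := hle.exists_code_eval_eq
  obtain ⟨j, hj⟩ := Function.ne_iff.1 hXY
  obtain ⟨k, hjk, rfl⟩ := frequently_atTop.1 (hs c) j
  have hne : (fun i : Fin (k + 1) => Y i) ≠ fun i : Fin (k + 1) => X i :=
    fun h => hj (congrFun h ⟨j, Nat.lt_succ_of_le hjk⟩).symm
  exact (node_succ_spec s k).2 hne _ (hθ Y (k + 1)) _ (hθ X (k + 1)) hc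

section Chain

variable {L : Type} {ι : Type*} (e : ι → L) (g : ι → ℕ → ℕ)

def muchnikChain [Preorder L] (x : L) : Set (ℕ → ℕ) := {f | ∃ i, e i ≤ x ∧ TuringLe (g i) f}

theorem muchnikLe_muchnikChain [Preorder L] {x y : L} (h : x ≤ y) :
    MuchnikLe (muchnikChain e g y) (muchnikChain e g x) :=
  muchnikLe_of_subset fun _ ⟨i, hi, hf⟩ => ⟨i, hi.trans h, hf⟩

theorem not_muchnikLe_muchnikChain [Preorder L] (he : ∀ x y, x < y → ∃ i, x < e i ∧ e i ≤ y)
    (hg : Pairwise fun i j => ¬ TuringLe (g i) (g j)) {x y : L} (h : x < y) :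
    ¬ MuchnikLe (muchnikChain e g x) (muchnikChain e g y) := by
  intro hle
  obtain ⟨i, hxi, hiy⟩ := he x y h
  obtain ⟨f, ⟨j, hjx, hjf⟩, hfi⟩ := hle (g i) ⟨i, hiy, TuringLe.refl _⟩
  exact hg (fun hji => (hjx.trans_lt hxi).ne (congrArg e hji)) (hjf.trans hfi)

theorem exists_muchnik_chain [LinearOrder L] (he : ∀ x y, x < y → ∃ i, x < e i ∧ e i ≤ y)
    (hg : Pairwise fun i j => ¬ TuringLe (g i) (g j)) :
    ∃ ℱ : Set (Set (ℕ → ℕ)), #ℱ = #L ∧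
      (∀ A ∈ ℱ, ∀ B ∈ ℱ, MuchnikLe A B ∨ MuchnikLe B A) ∧
      (∀ A ∈ ℱ, ∀ B ∈ ℱ, A ≠ B → ¬ MuchnikEquiv A B) := by
  have hlt {x y : L} (h : x < y) := not_muchnikLe_muchnikChain e g he hg h
  have hinj : Injective (muchnikChain e g) := fun x y hxy => by
    by_contra hne
    rcases lt_or_gt_of_ne hne with h | h
    exacts [hlt h (hxy ▸ muchnikLe_refl _), hlt h (hxy ▸ muchnikLe_refl _)]
  refine ⟨range (muchnikChain e g), mk_range_eq _ hinj, ?_, ?_⟩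
  · rintro _ ⟨x, rfl⟩ _ ⟨y, rfl⟩
    exact ((le_total x y).imp (muchnikLe_muchnikChain e g) (muchnikLe_muchnikChain e g)).symm
  · rintro _ ⟨x, rfl⟩ _ ⟨y, rfl⟩ hne ⟨hxy, hyx⟩
    rcases lt_or_gt_of_ne (ne_of_apply_ne _ hne) with h | h
    exacts [hlt h hxy, hlt h hyx]

end Chain

theorem exists_lt_toLex_boolIndicator_le {ι : Type*} [LinearOrder ι] [WellFoundedLT ι]
    {x y : Lex (ι → Bool)} (h : x < y) :
    ∃ γ, ∃ s ⊆ Iic γ, x < toLex s.boolIndicator ∧ toLex s.boolIndicator ≤ y := by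
  obtain ⟨γ, hagree, hγ⟩ := h
  obtain ⟨hxγ, hyγ⟩ := Bool.lt_iff.1 hγ
  set s : Set ι := {o | o ≤ γ ∧ y o = true}
  have hs (o : ι) : s.boolIndicator o = true ↔ o ≤ γ ∧ y o = true :=
    (s.mem_iff_boolIndicator o).symm
  refine ⟨γ, s, fun o ho => ho.1, ⟨γ, fun j hj => ?_, ?_⟩,
    Pi.toLex_monotone (b := ofLex y) fun o => ?_⟩
  · rw [Bool.eq_iff_iff, Pi.toLex_apply, hs, hagree j hj]
    exact (and_iff_right hj.le).symm
  · simp [hxγ, (hs γ).2 ⟨le_rfl, hyγ⟩]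
  · exact Bool.le_iff_imp.2 fun ho => ((hs o).1 ho).2

theorem two_power_aleph0_eq_aleph_one_of_univ (h : (2 : Cardinal.{u}) ^ ℵ₀ = ℵ₁) :
    (2 : Cardinal.{v}) ^ ℵ₀ = ℵ₁ := by
  rw [← lift_inj.{v, u}]
  simpa using congrArg lift.{v} h

theorem mk_Iic_toType_ord_aleph_one_le (γ : (aleph 1).ord.ToType) : #(Iic γ) ≤ ℵ₀ := by
  have hIio : #(Iio γ) ≤ ℵ₀ := lt_aleph_one_iff.1 (by simpa using mk_Iio_lt γ)
  rw [le_aleph0_iff_set_countable] at hIio ⊢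
  rw [← Iio_insert]
  exact hIio.insert γ

theorem mk_bounded_set_toType_ord_aleph_one_le (hCH : (2 : Cardinal.{0}) ^ ℵ₀ = ℵ₁) :
    #{s : Set (aleph 1).ord.ToType // #s ≤ ℵ₀} ≤ #(ℕ → Bool) := by
  refine (mk_bounded_set_le _ _).trans (le_of_eq ?_)
  rw [mk_ord_toType, max_eq_left aleph0_lt_aleph_one.le, ← hCH, ← power_mul, aleph0_mul_aleph0,
    ← power_def, mk_bool, mk_nat]

/-- (CH implies a big chain in the Muchnik lattice.) Assuming the continuum hypothesis
`2 ^ ℵ₀ = ℵ₁`, there is a family of mass problems of cardinality `2 ^ (2 ^ ℵ₀)` that is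
linearly ordered by `≤_w` and whose distinct members are pairwise non-Muchnik-equivalent. -/
theorem muchnik_chain_of_CH (hCH : (2 : Cardinal) ^ Cardinal.aleph0 = Cardinal.aleph 1) :
    ∃ ℱ : Set (Set (ℕ → ℕ)), #ℱ = (2 : Cardinal) ^ ((2 : Cardinal) ^ Cardinal.aleph0) ∧
      (∀ A ∈ ℱ, ∀ B ∈ ℱ, MuchnikLe A B ∨ MuchnikLe B A) ∧
      (∀ A ∈ ℱ, ∀ B ∈ ℱ, A ≠ B → ¬ MuchnikEquiv A B) := by
  have hCH₀ := two_power_aleph0_eq_aleph_one_of_univ.{_, 0} hCH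
  obtain ⟨j⟩ := mk_bounded_set_toType_ord_aleph_one_le hCH₀
  obtain ⟨θ, hθ⟩ := exists_pairwise_not_turingLe
  have hdense (x y : Lex ((aleph 1).ord.ToType → Bool)) (hxy : x < y) :
      ∃ s : {s : Set (aleph 1).ord.ToType // #s ≤ ℵ₀},
        x < toLex s.1.boolIndicator ∧ toLex s.1.boolIndicator ≤ y := by
    obtain ⟨γ, s, hs, hxs, hsy⟩ := exists_lt_toLex_boolIndicator_le hxy
    exact ⟨⟨s, (mk_le_mk_of_subset hs).trans (mk_Iic_toType_ord_aleph_one_le γ)⟩, hxs, hsy⟩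
  obtain ⟨ℱ, hcard, hchain, hineq⟩ :=
    exists_muchnik_chain _ (θ ∘ j) hdense (hθ.comp_of_injective j.injective)
  refine ⟨ℱ, ?_, hchain, hineq⟩
  change _ = #(_ → Bool) at hcard
  rw [hcard, ← power_def, mk_bool, mk_ord_toType, hCH₀]

end Muchnik
end

section
/- (Finite intervals in the Muchnik lattice.) Let B be any mass problem, let n ≥ 1, and let f_1, …, f_n ∈ ω^ω be pairwise Turing incomparable with ¬(B ≤_w {f_i}) for every i. For I ⊆ {1, …, n} define F(I) = B ∪ (⋃_{i∈I} C'(f_i)) ∪ {f_j : j ∉ I}. Then: (a) for all I, J ⊆ {1,…,n}, F(I) ≤_w F(J) if and only if I ⊆ J; and (b) for every mass problem C with F(∅) ≤_w C ≤_w F({1,…,n}) there exists I ⊆ {1,…,n} with C ≡_w F(I). Consequently the interval [B ∪ {f_1,…,f_n}, B ∪ C'(f_1) ∪ … ∪ C'(f_n)] in the Muchnik degrees is order-isomorphic to the Boolean algebra of subsets of {1,…,n}. -/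
open Cardinal

namespace Muchnik

lemma RecursiveIn.of_recIn {g h : ℕ → ℕ} {p : ℕ →. ℕ} (hp : RecursiveIn g p)
    (hg : RecursiveIn h ↑g) : RecursiveIn h p := by
  induction hp with
  | oracle => exact hg
  | zero => exact .zero
  | succ => exact .succ
  | left => exact .left
  | right => exact .right
  | pair _ _ ih1 ih2 => exact .pair ih1 ih2
  | comp _ _ ih1 ih2 => exact .comp ih1 ih2
  | prec _ _ ih1 ih2 => exact .prec ih1 ih2
  | rfind _ ih => exact .rfind ih

lemma TuringLe.trans_s8 {a b c : ℕ → ℕ} (hab : TuringLe a b) (hbc : TuringLe b c) :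
    TuringLe a c := RecursiveIn.of_recIn hab hbc

lemma TuringLe.refl_s8 (a : ℕ → ℕ) : TuringLe a a := RecursiveIn.oracle

/-- (Finite intervals in the Muchnik lattice.) Let `B` be a mass problem, `n ≥ 1`, and
`f 1, …, f n` pairwise Turing incomparable with `¬(B ≤_w {f i})` for every `i`. With
`F I = B ∪ (⋃ i ∈ I, C'(f i)) ∪ {f j : j ∉ I}`:
(a) `F I ≤_w F J ↔ I ⊆ J`, and
(b) every `C` with `F ∅ ≤_w C ≤_w F univ` is Muchnik equivalent to some `F I`.
Hence the interval `[B ∪ {f 1,…,f n}, B ∪ C'(f 1) ∪ … ∪ C'(f n)]` in the Muchnik degrees is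
order-isomorphic to the Boolean algebra of subsets of `{1,…,n}`. -/
theorem finite_interval_boolean (B : Set (ℕ → ℕ)) (n : ℕ) (hn : 1 ≤ n)
    (f : Fin n → (ℕ → ℕ)) (hinc : ∀ i j : Fin n, i ≠ j → TuringIncomp (f i) (f j))
    (hB : ∀ i : Fin n, ¬ MuchnikLe B {f i})
    (F : Set (Fin n) → Set (ℕ → ℕ))
    (hF : ∀ I : Set (Fin n), F I = B ∪ (⋃ i ∈ I, cone (f i)) ∪ {g | ∃ j ∉ I, g = f j}) :
    (∀ I J : Set (Fin n), MuchnikLe (F I) (F J) ↔ I ⊆ J) ∧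
    (∀ C : Set (ℕ → ℕ), MuchnikLe (F ∅) C → MuchnikLe C (F Set.univ) →
      ∃ I : Set (Fin n), MuchnikEquiv C (F I)) := by
  classical
  -- membership helpers
  have memB : ∀ (I : Set (Fin n)) (g), g ∈ B → g ∈ F I := by
    intro I g hg; rw [hF]; exact Or.inl (Or.inl hg)
  have memCone : ∀ (I : Set (Fin n)) (i) (g), i ∈ I → g ∈ cone (f i) → g ∈ F I := by
    intro I i g hi hg; rw [hF]
    exact Or.inl (Or.inr (Set.mem_biUnion hi hg))
  have memF : ∀ (I : Set (Fin n)) (j : Fin n), j ∉ I → f j ∈ F I := by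
    intro I j hj; rw [hF]; exact Or.inr ⟨j, hj, rfl⟩
  have cases : ∀ (I : Set (Fin n)) (g), g ∈ F I →
      g ∈ B ∨ (∃ i ∈ I, g ∈ cone (f i)) ∨ (∃ j ∉ I, g = f j) := by
    intro I g hg; rw [hF] at hg
    rcases hg with (hg | hg) | hg
    · exact Or.inl hg
    · rcases Set.mem_iUnion₂.mp hg with ⟨i, hi, hgi⟩
      exact Or.inr (Or.inl ⟨i, hi, hgi⟩)
    · exact Or.inr (Or.inr hg)
  -- part (a)
  have parta : ∀ I J : Set (Fin n), MuchnikLe (F I) (F J) ↔ I ⊆ J := by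
    intro I J
    constructor
    · intro hle i hiI
      by_contra hiJ
      obtain ⟨g, hgFI, hgle⟩ := hle (f i) (memF J i hiJ)
      rcases cases I g hgFI with hgB | ⟨k, hkI, hk1, hk2⟩ | ⟨j, hjI, rfl⟩
      · exact hB i (fun x hx => ⟨g, hgB, by rwa [Set.mem_singleton_iff.mp hx]⟩)
      · by_cases hki : k = i
        · subst hki; exact hk2 (hgle.trans_s8 (TuringLe.refl_s8 _))
        · exact (hinc k i hki).1 (hk1.trans_s8 hgle)
      · have hji : j ≠ i := fun h => hjI (h ▸ hiI)
        exact (hinc j i hji).1 hgle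
    · intro hIJ h hhFJ
      rcases cases J h hhFJ with hhB | ⟨i, hiJ, hhc⟩ | ⟨j, hjJ, rfl⟩
      · exact ⟨h, memB I h hhB, TuringLe.refl_s8 h⟩
      · by_cases hiI : i ∈ I
        · exact ⟨h, memCone I i h hiI hhc, TuringLe.refl_s8 h⟩
        · exact ⟨f i, memF I i hiI, hhc.1⟩
      · exact ⟨f j, memF I j (fun h => hjJ (hIJ h)), TuringLe.refl_s8 _⟩
  refine ⟨parta, ?_⟩
  intro C h1 h2
  set I : Set (Fin n) := {i | ¬ ∃ c ∈ C, TuringLe c (f i)} with hI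
  refine ⟨I, ?_, ?_⟩
  · -- MuchnikLe C (F I)
    intro h hhFI
    rcases cases I h hhFI with hhB | ⟨i, _, hhc⟩ | ⟨j, hjI, rfl⟩
    · exact h2 h (memB Set.univ h hhB)
    · exact h2 h (memCone Set.univ i h (Set.mem_univ i) hhc)
    · exact not_not.mp hjI
  · -- MuchnikLe (F I) C
    intro h hhC
    obtain ⟨g, hgF0, hgle⟩ := h1 h hhC
    rcases cases ∅ g hgF0 with hgB | ⟨i, hi, _⟩ | ⟨j, _, rfl⟩
    · exact ⟨g, memB I g hgB, hgle⟩
    · exact absurd hi (Set.notMem_empty i)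
    · by_cases hjI : j ∈ I
      · have hnh : ¬ TuringLe h (f j) := fun hle => hjI ⟨h, hhC, hle⟩
        exact ⟨h, memCone I j h hjI ⟨hgle, hnh⟩, TuringLe.refl_s8 h⟩
      · exact ⟨f j, memF I j hjI, hgle⟩

end Muchnik
end
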